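/- Define the offset estimator θ̂ from a timestamp P̂ ∈ [0, φ) with delay κ ∈ [0, φ/2) by θ̂ = P̂ if P̂ < φ/2 + κ, and θ̂ = P̂ - φ otherwise. If the true offset θ satisfies |θ| < φ/2 and the received timestamp is P̂ = (θ + κ) mod φ, then θ̂ = θ + κ. -/

import Mathlib

/-!
The estimator is exactly the reduction of `P` modulo `φ` into the window
`[κ - φ / 2, κ + φ / 2)`: on `[0, φ)` this reduction either keeps `P` or subtracts one period.
Since `P ≡ θ + κ (mod φ)` and `|θ| < φ / 2` puts `θ + κ` inside that window, the reduction
returns `θ + κ` itself.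
-/

open Set

section ToIcoMod

variable {α : Type*}

theorem toIcoMod_eq_ite [AddCommGroup α] [LinearOrder α] [IsOrderedAddMonoid α] [Archimedean α]
    {p : α} (hp : 0 < p) {a b : α} (ha : a ≤ 0) (ha' : -p ≤ a) (hb : b ∈ Ico 0 p) :
    toIcoMod hp a b = if b < a + p then b else b - p := by
  obtain ⟨hb0, hbp⟩ := hb
  split_ifs with h
  · exact (toIcoMod_eq_self hp).2 ⟨ha.trans hb0, h⟩
  · refine (toIcoMod_eq_iff hp).2 ⟨⟨le_sub_iff_add_le.2 (not_lt.1 h), ?_⟩, 1, by simp⟩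
    rw [sub_lt_iff_lt_add]
    exact hbp.trans_le (le_add_of_nonneg_left (neg_le_iff_add_nonneg.1 ha'))

theorem sub_mul_floor_div_eq_toIcoMod [Field α] [LinearOrder α] [IsStrictOrderedRing α]
    [FloorRing α] {p : α} (hp : 0 < p) (x : α) :
    x - p * ⌊x / p⌋ = toIcoMod hp 0 x := by
  rw [toIcoMod, toIcoDiv_eq_floor, sub_zero, zsmul_eq_mul, mul_comm]

end ToIcoMod

theorem pkcos_offset_estimator_correct (φ κ θ : ℝ) (hφ : 0 < φ)
    (hκ0 : 0 ≤ κ) (hκ : κ < φ / 2) (hθ : |θ| < φ / 2)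
    (P : ℝ) (hP : P = (θ + κ) - φ * ⌊(θ + κ) / φ⌋)
    (θhat : ℝ) (hest : θhat = if P < φ / 2 + κ then P else P - φ) :
    θhat = θ + κ := by
  rw [sub_mul_floor_div_eq_toIcoMod hφ] at hP
  have hwindow : κ - φ / 2 + φ = φ / 2 + κ := by ring
  have hθκ : θ + κ ∈ Ico (κ - φ / 2) (κ - φ / 2 + φ) := by
    obtain ⟨hθl, hθr⟩ := abs_lt.1 hθ
    constructor <;> linarith
  calc θhat = toIcoMod hφ (κ - φ / 2) P := by
        rw [hest, toIcoMod_eq_ite hφ (by linarith) (by linarith), hwindow]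
        exact hP ▸ toIcoMod_mem_Ico' hφ _
    _ = θ + κ := by rw [hP, toIcoMod_toIcoMod, toIcoMod_eq_self hφ]; exact hθκ
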